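/- Let n ≥ 1, let A be an n×n integer matrix with det A ≠ 0, and set d := |det A|. Let Ψ, Ψ' : ℝⁿ → ℂ and c ∈ ℂ be such that for every x ∈ ℝⁿ the family (conj(Ψ(x+v))·Ψ'(x+v))_{v ∈ ℤⁿ} is absolutely summable with ∑_{v ∈ ℤⁿ} conj(Ψ(x+v))·Ψ'(x+v) = c. For β ∈ ℤⁿ define (Dε_β Ψ)(x) = d^{−1/2} e(−β · (Aᵀ)⁻¹x) Ψ((Aᵀ)⁻¹x). Then for all β, β' ∈ ℤⁿ and every x ∈ ℝⁿ, the family (conj((Dε_β Ψ)(x+v))·(Dε_{β'} Ψ')(x+v))_{v ∈ ℤⁿ} is summable, and: (i) if β − β' ∉ A(ℤⁿ), then ∑_{v ∈ ℤⁿ} conj((Dε_β Ψ)(x+v))·(Dε_{β'} Ψ')(x+v) = 0; (ii) if β = β', then ∑_{v ∈ ℤⁿ} conj((Dε_β Ψ)(x+v))·(Dε_{β'} Ψ')(x+v) = c. -/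

import Mathlib

/-- The exponential function `e(r) = e^{2πir}`. -/
noncomputable def e (r : ℝ) : ℂ := Complex.exp (2 * Real.pi * Complex.I * r)

/-- The operator `Dε_β` for an integer matrix `A`:
`(Dε_β Ψ)(x) = |det A|^{−1/2} e(−β·(Aᵀ)⁻¹x) Ψ((Aᵀ)⁻¹x)`. -/
noncomputable def Deps (n : ℕ) (A : Matrix (Fin n) (Fin n) ℤ) (β : Fin n → ℤ)
    (Ψ : (Fin n → ℝ) → ℂ) (x : Fin n → ℝ) : ℂ :=
  ((Real.sqrt |(A.det : ℝ)|)⁻¹ : ℝ) *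
    e (-(∑ i : Fin n,
      (β i : ℝ) * ((A.map (Int.cast : ℤ → ℝ)).transpose⁻¹.mulVec x) i)) *
    Ψ ((A.map (Int.cast : ℤ → ℝ)).transpose⁻¹.mulVec x)

section Helpers

lemma e_add (r s : ℝ) : e (r + s) = e r * e s := by
  simp only [e, ← Complex.exp_add]
  congr 1
  push_cast
  ring

lemma e_int (m : ℤ) : e m = 1 := by
  rw [e]
  rw [show 2 * (Real.pi : ℂ) * Complex.I * (m : ℝ) = (m : ℤ) * (2 * Real.pi * Complex.I) by
    push_cast; ring]
  exact Complex.exp_int_mul_two_pi_mul_I m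

lemma e_int_add (r : ℝ) (m : ℤ) : e (r + m) = e r := by
  rw [e_add, e_int, mul_one]

lemma conj_e (r : ℝ) : (starRingEnd ℂ) (e r) = e (-r) := by
  rw [e, e, ← Complex.exp_conj]
  congr 1
  simp only [map_mul, Complex.conj_I, Complex.conj_ofNat]
  rw [Complex.conj_ofReal, Complex.conj_ofReal]
  push_cast
  ring

lemma e_eq_one_iff (r : ℝ) : e r = 1 ↔ ∃ m : ℤ, r = m := by
  rw [e, Complex.exp_eq_one_iff]
  constructor
  · rintro ⟨m, hm⟩
    refine ⟨m, ?_⟩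
    have h2 : (2 * (Real.pi : ℂ) * Complex.I) ≠ 0 := by
      have hp : (Real.pi : ℂ) ≠ 0 := by exact_mod_cast Real.pi_ne_zero
      exact mul_ne_zero (mul_ne_zero two_ne_zero hp) Complex.I_ne_zero
    have h3 : (r : ℂ) = (m : ℂ) := by
      refine mul_left_cancel₀ h2 ?_
      rw [show (2 * (Real.pi:ℂ) * Complex.I) * r = 2 * (Real.pi:ℂ) * Complex.I * r by ring, hm]
      ring
    exact_mod_cast h3
  · rintro ⟨m, rfl⟩
    exact ⟨m, by push_cast; ring⟩

lemma norm_e (r : ℝ) : ‖e r‖ = 1 := by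
  rw [e]
  rw [show 2 * (Real.pi : ℂ) * Complex.I * (r : ℝ) = ((2 * Real.pi * r : ℝ) : ℂ) * Complex.I by
    push_cast; ring]
  exact Complex.norm_exp_ofReal_mul_I _

open Matrix

lemma toMatrix_coe_mul {n : ℕ} {N : Submodule ℤ (Fin n → ℤ)}
    (b : Module.Basis (Fin n) ℤ (Fin n → ℤ)) (c1 c2 : Module.Basis (Fin n) ℤ N) :
    b.toMatrix (fun i => (c2 i : Fin n → ℤ)) =
      b.toMatrix (fun i => (c1 i : Fin n → ℤ)) * c1.toMatrix c2 := by
  ext j i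
  have h : (c2 i : Fin n → ℤ) = ∑ k, c1.repr (c2 i) k • (c1 k : Fin n → ℤ) := by
    conv_lhs => rw [← c1.sum_repr (c2 i)]
    push_cast
    rfl
  simp only [Module.Basis.toMatrix_apply, Matrix.mul_apply, h, map_sum, _root_.map_smul,
    Finsupp.coe_finset_sum, Finsupp.coe_smul, Finset.sum_apply, Pi.smul_apply, smul_eq_mul]
  exact Finset.sum_congr rfl fun k _ => mul_comm _ _

lemma cast_mulVec {n : ℕ} (A : Matrix (Fin n) (Fin n) ℤ) (w : Fin n → ℤ) :
    (fun i => ((A.mulVec w) i : ℝ)) =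
      (A.map (Int.cast : ℤ → ℝ)).mulVec (fun i => (w i : ℝ)) := by
  funext i
  simp [Matrix.mulVec, dotProduct, Matrix.map_apply]

lemma det_cast {n : ℕ} (A : Matrix (Fin n) (Fin n) ℤ) :
    (A.map (Int.cast : ℤ → ℝ)).det = (A.det : ℝ) := by
  rw [show A.map (Int.cast : ℤ → ℝ) = (Int.castRingHom ℝ).mapMatrix A from rfl,
    ← RingHom.map_det]
  rfl

lemma mulVecLin_int_injective {n : ℕ} (A : Matrix (Fin n) (Fin n) ℤ) (hA : A.det ≠ 0) :
    Function.Injective A.mulVecLin := by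
  intro w1 w2 h
  have hU : IsUnit (A.map (Int.cast : ℤ → ℝ)) := by
    rw [Matrix.isUnit_iff_isUnit_det, isUnit_iff_ne_zero, det_cast]
    exact_mod_cast hA
  have hinj := Matrix.mulVec_injective_iff_isUnit.mpr hU
  have h' : A.mulVec w1 = A.mulVec w2 := h
  have hR : (A.map (Int.cast : ℤ → ℝ)).mulVec (fun i => (w1 i : ℝ)) =
      (A.map (Int.cast : ℤ → ℝ)).mulVec (fun i => (w2 i : ℝ)) := by
    rw [← cast_mulVec, ← cast_mulVec, h']
  have := hinj hR
  funext i
  exact_mod_cast congrFun this i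

lemma card_quot_eq_natAbs_det {n : ℕ} (A : Matrix (Fin n) (Fin n) ℤ) (hA : A.det ≠ 0) :
    Nat.card ((Fin n → ℤ) ⧸ LinearMap.range A.mulVecLin) = A.det.natAbs := by
  classical
  set N : Submodule ℤ (Fin n → ℤ) := LinearMap.range A.mulVecLin with hN
  have hg := mulVecLin_int_injective A hA
  let eN : (Fin n → ℤ) ≃ₗ[ℤ] N := LinearEquiv.ofInjective A.mulVecLin hg
  obtain ⟨m, snf⟩ := N.smithNormalForm (Pi.basisFun ℤ (Fin n))
  have hm : m = n := by
    have e2 : Fin m ≃ Fin n := snf.bN.indexEquiv ((Pi.basisFun ℤ (Fin n)).map eN)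
    simpa using Fintype.card_congr e2
  rw [hm] at snf
  clear hm
  have h1 : N.toAddSubgroup.index = ∏ i, (snf.a i).natAbs := by
    rw [snf.toAddSubgroup_index_eq_pow_mul_prod]
    simp [Ideal.span_singleton_toAddSubgroup_eq_zmultiples, Int.index_zmultiples]
  set bfun := Pi.basisFun ℤ (Fin n)
  set bC : Module.Basis (Fin n) ℤ N := bfun.map eN with hbC
  have hCA : bfun.toMatrix (fun i => (bC i : Fin n → ℤ)) = A := by
    ext j i
    have hco : ((eN (Pi.single i 1)) : Fin n → ℤ) = A.mulVec (Pi.single i 1) := rfl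
    simp [Module.Basis.toMatrix_apply, hbC, Module.Basis.map_apply, hco, Matrix.mulVec_single, bfun]
  have hchain1 : bfun.toMatrix (fun i => (bC i : Fin n → ℤ)) =
      bfun.toMatrix ⇑snf.bM * snf.bM.toMatrix (fun i => (bC i : Fin n → ℤ)) :=
    (Module.Basis.toMatrix_mul_toMatrix bfun snf.bM _).symm
  have hchain2 : snf.bM.toMatrix (fun i => (bC i : Fin n → ℤ)) =
      snf.bM.toMatrix (fun i => (snf.bN i : Fin n → ℤ)) * snf.bN.toMatrix bC :=
    toMatrix_coe_mul snf.bM snf.bN bC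
  have hu1 : (bfun.toMatrix ⇑snf.bM).det.natAbs = 1 := by
    have := Module.Basis.toMatrix_mul_toMatrix_flip bfun snf.bM
    have hdet : (bfun.toMatrix ⇑snf.bM).det * (snf.bM.toMatrix ⇑bfun).det = 1 := by
      rw [← Matrix.det_mul, this, Matrix.det_one]
    have : IsUnit (bfun.toMatrix ⇑snf.bM).det := IsUnit.of_mul_eq_one _ hdet
    rcases Int.isUnit_iff.mp this with h | h <;> simp [h]
  have hu2 : (snf.bN.toMatrix bC).det.natAbs = 1 := by
    have := Module.Basis.toMatrix_mul_toMatrix_flip snf.bN bC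
    have hdet : (snf.bN.toMatrix bC).det * (bC.toMatrix snf.bN).det = 1 := by
      rw [← Matrix.det_mul, this, Matrix.det_one]
    have : IsUnit (snf.bN.toMatrix bC).det := IsUnit.of_mul_eq_one _ hdet
    rcases Int.isUnit_iff.mp this with h | h <;> simp [h]
  have hf_bij : Function.Bijective snf.f := (Finite.injective_iff_bijective).mp snf.f.injective
  let σ : Equiv.Perm (Fin n) := Equiv.ofBijective snf.f hf_bij
  have hmid : snf.bM.toMatrix (fun i => (snf.bN i : Fin n → ℤ)) =
      (Matrix.diagonal snf.a).submatrix ⇑σ.symm id := by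
    ext j i
    simp only [Module.Basis.toMatrix_apply, snf.snf i, _root_.map_smul, Finsupp.smul_apply,
      Module.Basis.repr_self, smul_eq_mul, Matrix.submatrix_apply, id_eq, Matrix.diagonal_apply]
    rw [Finsupp.single_apply]
    have : σ.symm j = i ↔ snf.f i = j := by
      constructor
      · intro h; rw [← h]; exact (σ.apply_symm_apply j)
      · intro h; rw [← h]; exact (σ.symm_apply_apply i)
    split_ifs with h1' h2' h2'
    · rw [h2', mul_one]
    · exact absurd (this.mpr h1') h2'
    · exact absurd (this.mp h2') h1'
    · simp
  have hmiddet : (snf.bM.toMatrix (fun i => (snf.bN i : Fin n → ℤ))).det.natAbs =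
      ∏ i, (snf.a i).natAbs := by
    rw [hmid]
    rw [Matrix.det_permute σ.symm (Matrix.diagonal snf.a)]
    rw [Matrix.det_diagonal, Int.natAbs_mul]
    have hprod : (∏ i, snf.a i).natAbs = ∏ i, (snf.a i).natAbs :=
      map_prod Int.natAbsHom snf.a Finset.univ
    rcases Int.units_eq_one_or (Equiv.Perm.sign σ.symm) with h | h <;>
      simp [h, hprod]
  have hdetA : A.det.natAbs = ∏ i, (snf.a i).natAbs := by
    rw [← hCA, hchain1, hchain2, Matrix.det_mul, Matrix.det_mul, Int.natAbs_mul,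
      Int.natAbs_mul, hu1, hmiddet, hu2, one_mul, mul_one]
  have hcard : Nat.card ((Fin n → ℤ) ⧸ N) = N.toAddSubgroup.index := rfl
  rw [hcard, h1, hdetA]

end Helpers

open Matrix

set_option maxHeartbeats 1000000 in
/-- If `⟨Ψ,Ψ'⟩(x) = ∑_{v∈ℤⁿ} conj(Ψ(x+v))Ψ'(x+v)` is absolutely
summable with constant value `c`, then for all `β, β' ∈ ℤⁿ` the family
`(conj((Dε_βΨ)(x+v))(Dε_{β'}Ψ')(x+v))_v` is summable, its sum is `0` when
`β − β' ∉ A(ℤⁿ)`, and equals `c` when `β = β'`. -/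
theorem stmt_9 (n : ℕ) (hn : 1 ≤ n) (A : Matrix (Fin n) (Fin n) ℤ)
    (hA : A.det ≠ 0) (Ψ Ψ' : (Fin n → ℝ) → ℂ) (c : ℂ)
    (habs : ∀ x : Fin n → ℝ,
      Summable (fun v : Fin n → ℤ =>
        ‖(starRingEnd ℂ) (Ψ (x + fun i => (v i : ℝ))) * Ψ' (x + fun i => (v i : ℝ))‖))
    (hip : ∀ x : Fin n → ℝ,
      ∑' v : Fin n → ℤ,
        (starRingEnd ℂ) (Ψ (x + fun i => (v i : ℝ))) * Ψ' (x + fun i => (v i : ℝ)) = c) :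
    ∀ (β β' : Fin n → ℤ) (x : Fin n → ℝ),
      Summable (fun v : Fin n → ℤ =>
        (starRingEnd ℂ) (Deps n A β Ψ (x + fun i => (v i : ℝ))) *
          Deps n A β' Ψ' (x + fun i => (v i : ℝ))) ∧
      (β - β' ∉ LinearMap.range A.mulVecLin →
        ∑' v : Fin n → ℤ,
          (starRingEnd ℂ) (Deps n A β Ψ (x + fun i => (v i : ℝ))) *
            Deps n A β' Ψ' (x + fun i => (v i : ℝ)) = 0) ∧
      (β = β' →
        ∑' v : Fin n → ℤ,
          (starRingEnd ℂ) (Deps n A β Ψ (x + fun i => (v i : ℝ))) *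
            Deps n A β' Ψ' (x + fun i => (v i : ℝ)) = c) := by
  classical
  intro β β' x
  set d : ℝ := |(A.det : ℝ)| with hd
  have hd0 : 0 < d := by
    rw [hd]
    exact abs_pos.mpr (by exact_mod_cast hA)
  set s : ℝ := (Real.sqrt d)⁻¹ with hs
  set Ar : Matrix (Fin n) (Fin n) ℝ := A.map (Int.cast : ℤ → ℝ) with hAr
  set B : Matrix (Fin n) (Fin n) ℝ := Ar.transpose⁻¹ with hB
  have hdetAr : Ar.det = (A.det : ℝ) := det_cast A
  have hUt : IsUnit Ar.transpose.det := by
    rw [Matrix.det_transpose, hdetAr, isUnit_iff_ne_zero]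
    exact_mod_cast hA
  have hBA : B * Ar.transpose = 1 := Matrix.nonsing_inv_mul _ hUt
  have hcastT : ∀ w : Fin n → ℤ, (fun i => ((A.transpose.mulVec w) i : ℝ)) =
      Ar.transpose.mulVec (fun i => (w i : ℝ)) := by
    intro w
    funext i
    simp [Matrix.mulVec, dotProduct, Matrix.map_apply, hAr, Matrix.transpose_apply]
  have key : ∀ w : Fin n → ℤ, B.mulVec (fun i => ((A.transpose.mulVec w) i : ℝ)) =
      fun i => (w i : ℝ) := by
    intro w
    rw [hcastT, Matrix.mulVec_mulVec, hBA, Matrix.one_mulVec]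
  set δ : Fin n → ℤ := β - β' with hδdef
  set y : (Fin n → ℤ) → (Fin n → ℝ) := fun v => B.mulVec (x + fun i => (v i : ℝ)) with hy
  set F : (Fin n → ℤ) → ℂ := fun v =>
    (starRingEnd ℂ) (Deps n A β Ψ (x + fun i => (v i : ℝ))) *
      Deps n A β' Ψ' (x + fun i => (v i : ℝ)) with hF
  -- pointwise formula
  have hterm : ∀ v : Fin n → ℤ, F v =
      ((s * s : ℝ) : ℂ) * e (∑ i, (δ i : ℝ) * y v i) *
        ((starRingEnd ℂ) (Ψ (y v)) * Ψ' (y v)) := by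
    intro v
    rw [hF]
    show (starRingEnd ℂ) (Deps n A β Ψ (x + fun i => (v i : ℝ))) *
      Deps n A β' Ψ' (x + fun i => (v i : ℝ)) = _
    rw [Deps, Deps]
    rw [← hAr, ← hB, ← hd, ← hs]
    have hyv : B.mulVec (x + fun i => (v i : ℝ)) = y v := rfl
    rw [hyv]
    rw [_root_.map_mul, _root_.map_mul, Complex.conj_ofReal, conj_e, neg_neg]
    have hmerge : e (∑ i, (δ i : ℝ) * y v i) =
        e (∑ i, (β i : ℝ) * y v i) * e (-(∑ i, (β' i : ℝ) * y v i)) := by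
      rw [← e_add]
      congr 1
      rw [← Finset.sum_neg_distrib, ← Finset.sum_add_distrib]
      refine Finset.sum_congr rfl fun i _ => ?_
      have h5 : (δ i : ℝ) = (β i : ℝ) - (β' i : ℝ) := by
        rw [hδdef]
        push_cast [Pi.sub_apply]
        ring
      rw [h5]
      ring
    rw [hmerge]
    push_cast
    ring
  -- the lattice and quotient
  set N : Submodule ℤ (Fin n → ℤ) := LinearMap.range A.transpose.mulVecLin with hN
  have hdetT : A.transpose.det ≠ 0 := by rwa [Matrix.det_transpose]
  have hcardN : Nat.card ((Fin n → ℤ) ⧸ N) = A.det.natAbs := by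
    rw [hN, card_quot_eq_natAbs_det A.transpose hdetT, Matrix.det_transpose]
  have hfinQ : Finite ((Fin n → ℤ) ⧸ N) := by
    apply Nat.finite_of_card_ne_zero
    rw [hcardN]
    simpa using hA
  haveI := Fintype.ofFinite ((Fin n → ℤ) ⧸ N)
  have hinjT := mulVecLin_int_injective A.transpose hdetT
  -- the bijection
  have hEbij : Function.Bijective (fun p : ((Fin n → ℤ) ⧸ N) × (Fin n → ℤ) =>
      p.1.out + A.transpose.mulVec p.2) := by
    constructor
    · rintro ⟨q1, w1⟩ ⟨q2, w2⟩ h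
      simp only at h
      have hmem : q1.out - q2.out ∈ N := by
        refine ⟨w2 - w1, ?_⟩
        have h6 : A.transpose.mulVecLin (w2 - w1) =
            A.transpose.mulVec w2 - A.transpose.mulVec w1 := by
          rw [map_sub]; rfl
        rw [h6]
        linear_combination -(h : q1.out + A.transpose.mulVec w1 = q2.out + A.transpose.mulVec w2)
      have hq : q1 = q2 := by
        rw [← Quotient.out_eq q1, ← Quotient.out_eq q2]
        exact (Submodule.Quotient.eq N).mpr hmem
      subst hq
      have hw : A.transpose.mulVec w1 = A.transpose.mulVec w2 := by
        have := h
        rwa [add_right_inj] at this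
      have : w1 = w2 := hinjT hw
      rw [this]
    · intro v
      have h1 : (Submodule.Quotient.mk ((Submodule.Quotient.mk v : (Fin n → ℤ) ⧸ N).out)
          : (Fin n → ℤ) ⧸ N) = Submodule.Quotient.mk v := Quotient.out_eq _
      have hmem : v - (Submodule.Quotient.mk v : (Fin n → ℤ) ⧸ N).out ∈ N :=
        (Submodule.Quotient.eq N).mp h1.symm
      obtain ⟨w, hw⟩ := hmem
      refine ⟨⟨Submodule.Quotient.mk v, w⟩, ?_⟩
      simp only
      rw [show A.transpose.mulVec w = v - (Submodule.Quotient.mk v : (Fin n → ℤ) ⧸ N).out from hw]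
      abel
  set E : (((Fin n → ℤ) ⧸ N) × (Fin n → ℤ)) ≃ (Fin n → ℤ) :=
    Equiv.ofBijective _ hEbij with hE
  have hEapp : ∀ q w, E (q, w) = q.out + A.transpose.mulVec w := fun _ _ => rfl
  -- yq
  set yq : ((Fin n → ℤ) ⧸ N) → (Fin n → ℝ) :=
    fun q => B.mulVec (x + fun i => ((q.out : Fin n → ℤ) i : ℝ)) with hyq
  have hyE : ∀ q w, y (E (q, w)) = yq q + fun i => (w i : ℝ) := by
    intro q w
    have hEq : E (q, w) = q.out + A.transpose.mulVec w := rfl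
    rw [hEq]
    have hsplit : (x + fun i => (((q.out + A.transpose.mulVec w) : Fin n → ℤ) i : ℝ)) =
        (x + fun i => ((q.out : Fin n → ℤ) i : ℝ)) +
          fun i => (((A.transpose.mulVec w) : Fin n → ℤ) i : ℝ) := by
      funext i
      simp only [Pi.add_apply]
      push_cast
      ring
    show B.mulVec (x + fun i => (((q.out + A.transpose.mulVec w) : Fin n → ℤ) i : ℝ)) =
      B.mulVec (x + fun i => ((q.out : Fin n → ℤ) i : ℝ)) + fun i => (w i : ℝ)
    rw [hsplit, Matrix.mulVec_add, key]
  set C : ((Fin n → ℤ) ⧸ N) → ℂ :=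
    fun q => ((s * s : ℝ) : ℂ) * e (∑ i, (δ i : ℝ) * yq q i) with hC
  have hEterm : ∀ q w, F (E (q, w)) =
      C q * ((starRingEnd ℂ) (Ψ (yq q + fun i => (w i : ℝ))) *
        Ψ' (yq q + fun i => (w i : ℝ))) := by
    intro q w
    rw [hterm, hyE]
    have hphase : (∑ i, (δ i : ℝ) * (yq q + fun i => (w i : ℝ)) i) =
        (∑ i, (δ i : ℝ) * yq q i) + ((∑ i, δ i * w i : ℤ) : ℝ) := by
      push_cast
      rw [← Finset.sum_add_distrib]
      refine Finset.sum_congr rfl fun i _ => ?_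
      simp only [Pi.add_apply]
      ring
    rw [hphase, e_int_add, hC]
  -- summability
  have hSq : ∀ q, Summable (fun w : Fin n → ℤ => F (E (q, w))) := by
    intro q
    exact (((habs (yq q)).of_norm).mul_left (C q)).congr (fun w => (hEterm q w).symm)
  have hGsum : Summable (fun p : ((Fin n → ℤ) ⧸ N) × (Fin n → ℤ) => F (E p)) := by
    have hnn : Summable (fun p : (Σ _ : ((Fin n → ℤ) ⧸ N), (Fin n → ℤ)) =>
        ‖F (E (p.1, p.2))‖) := by
      apply (summable_sigma_of_nonneg (fun _ => norm_nonneg _)).mpr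
      exact ⟨fun q => (hSq q).norm, Summable.of_finite⟩
    have hsig := hnn.of_norm
    have := (Equiv.sigmaEquivProd ((Fin n → ℤ) ⧸ N) (Fin n → ℤ)).summable_iff
      (f := fun p : ((Fin n → ℤ) ⧸ N) × (Fin n → ℤ) => F (E p))
    apply this.mp
    exact hsig.congr (fun p => rfl)
  have hFsum : Summable F := E.summable_iff.mp hGsum
  have htsum : ∑' v, F v = ∑ q : ((Fin n → ℤ) ⧸ N), (C q * c) := by
    rw [← E.tsum_eq F]
    rw [Summable.tsum_prod hGsum]
    rw [tsum_fintype]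
    refine Finset.sum_congr rfl fun q _ => ?_
    calc (∑' w, F (E (q, w)))
        = ∑' w : Fin n → ℤ, C q * ((starRingEnd ℂ) (Ψ (yq q + fun i => (w i : ℝ))) *
            Ψ' (yq q + fun i => (w i : ℝ))) := tsum_congr (hEterm q)
      _ = C q * (∑' w : Fin n → ℤ, (starRingEnd ℂ) (Ψ (yq q + fun i => (w i : ℝ))) *
            Ψ' (yq q + fun i => (w i : ℝ))) := tsum_mul_left
      _ = C q * c := by rw [hip (yq q)]
  refine ⟨hFsum, ?_, ?_⟩
  · -- case β - β' ∉ A(ℤⁿ)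
    intro hβ
    rw [htsum]
    -- define the character g
    set g : (Fin n → ℤ) → ℂ :=
      fun v => e (∑ i, (δ i : ℝ) * (B.mulVec (fun j => (v j : ℝ))) i) with hgdef
    have hg_add : ∀ u v, g (u + v) = g u * g v := by
      intro u v
      rw [hgdef]
      simp only
      rw [← e_add]
      congr 1
      have hcast : (fun j => (((u + v) : Fin n → ℤ) j : ℝ)) =
          (fun j => (u j : ℝ)) + fun j => (v j : ℝ) := by
        funext j
        simp only [Pi.add_apply]
        push_cast
        ring
      rw [hcast, Matrix.mulVec_add, ← Finset.sum_add_distrib]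
      refine Finset.sum_congr rfl fun i _ => ?_
      simp only [Pi.add_apply]
      ring
    have hg_N : ∀ z ∈ N, g z = 1 := by
      rintro z ⟨k, rfl⟩
      rw [hgdef]
      simp only
      have : (fun j => ((A.transpose.mulVecLin k : Fin n → ℤ) j : ℝ)) =
          fun j => (((A.transpose.mulVec k) : Fin n → ℤ) j : ℝ) := rfl
      rw [this, key]
      have : (∑ i, (δ i : ℝ) * (k i : ℝ)) = ((∑ i, δ i * k i : ℤ) : ℝ) := by
        push_cast
        ring
      rw [this, e_int]
    set G : ((Fin n → ℤ) ⧸ N) → ℂ := fun q => g q.out with hG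
    -- relate C q to G q
    have hyqsplit : ∀ q, yq q = B.mulVec x + B.mulVec (fun i => ((q.out : Fin n → ℤ) i : ℝ)) := by
      intro q
      rw [hyq]
      exact Matrix.mulVec_add B x _
    have hCG : ∀ q, C q = ((s * s : ℝ) : ℂ) * e (∑ i, (δ i : ℝ) * (B.mulVec x) i) * G q := by
      intro q
      rw [hC, hG, hgdef]
      simp only
      rw [hyqsplit q]
      have : (∑ i, (δ i : ℝ) * (B.mulVec x + B.mulVec (fun i => ((q.out : Fin n → ℤ) i : ℝ))) i)
          = (∑ i, (δ i : ℝ) * (B.mulVec x) i) +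
            (∑ i, (δ i : ℝ) * (B.mulVec (fun j => ((q.out : Fin n → ℤ) j : ℝ))) i) := by
        rw [← Finset.sum_add_distrib]
        refine Finset.sum_congr rfl fun i _ => ?_
        simp only [Pi.add_apply]
        ring
      rw [this, e_add]
      ring
    -- the shift property
    have hGshift : ∀ (u : Fin n → ℤ) (q : ((Fin n → ℤ) ⧸ N)),
        G (Submodule.Quotient.mk u + q) = g u * G q := by
      intro u q
      rw [hG]
      simp only
      have h3 : (Submodule.Quotient.mk q.out : (Fin n → ℤ) ⧸ N) = q := Quotient.out_eq q
      have h4 : (Submodule.Quotient.mk ((Submodule.Quotient.mk u + q : (Fin n → ℤ) ⧸ N).out)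
          : (Fin n → ℤ) ⧸ N) = Submodule.Quotient.mk u + q := Quotient.out_eq _
      have hmk : (Submodule.Quotient.mk ((Submodule.Quotient.mk u + q : (Fin n → ℤ) ⧸ N).out)
          : (Fin n → ℤ) ⧸ N) = Submodule.Quotient.mk (u + q.out) := by
        rw [h4, Submodule.Quotient.mk_add, h3]
      have hmem : (Submodule.Quotient.mk u + q : (Fin n → ℤ) ⧸ N).out - (u + q.out) ∈ N :=
        (Submodule.Quotient.eq N).mp hmk
      have : g ((Submodule.Quotient.mk u + q : (Fin n → ℤ) ⧸ N).out) =
          g (((Submodule.Quotient.mk u + q : (Fin n → ℤ) ⧸ N).out - (u + q.out)) + (u + q.out)) := by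
        congr 1
        abel
      rw [this, hg_add, hg_N _ hmem, one_mul, hg_add]
    -- nontriviality
    have hnontriv : ∃ i : Fin n, g (Pi.single i 1) ≠ 1 := by
      by_contra hcon
      push_neg at hcon
      have hall : ∀ i, ∃ m : ℤ,
          (∑ k, (δ k : ℝ) * (B.mulVec (fun j => (((Pi.single i 1 : Fin n → ℤ)) j : ℝ))) k)
            = m := by
        intro i
        have := hcon i
        rw [hgdef] at this
        simp only at this
        exact (e_eq_one_iff _).mp this
      choose m hm using hall
      apply hβ
      refine ⟨m, ?_⟩
      have hsingle : ∀ i : Fin n, (fun j => (((Pi.single i 1 : Fin n → ℤ)) j : ℝ)) =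
          Pi.single i (1 : ℝ) := by
        intro i
        funext j
        rcases eq_or_ne j i with h | h
        · subst h; simp
        · simp [Pi.single_apply, h]
      have ht : ∀ i, (∑ k, (δ k : ℝ) * B k i) = m i := by
        intro i
        have := hm i
        rw [hsingle i] at this
        rw [Matrix.mulVec_single] at this
        simpa [mul_one] using this
      -- castδ = Ar.mulVec (cast m)
      have hvec : (fun i => (δ i : ℝ)) ᵥ* B = fun i => (m i : ℝ) := by
        funext i
        rw [← ht i]
        simp [Matrix.vecMul, dotProduct]
      have hcastδ : (fun i => (δ i : ℝ)) = (fun i => (m i : ℝ)) ᵥ* Ar.transpose := by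
        have h1 : ((fun i => (δ i : ℝ)) ᵥ* B) ᵥ* Ar.transpose =
            (fun i => (δ i : ℝ)) ᵥ* (B * Ar.transpose) := Matrix.vecMul_vecMul _ B Ar.transpose
        rw [hvec, hBA, Matrix.vecMul_one] at h1
        exact h1.symm
      have hAm : (fun i => ((A.mulVec m) i : ℝ)) = fun i => (δ i : ℝ) := by
        rw [cast_mulVec, ← hAr, hcastδ]
        funext i
        rw [Matrix.vecMul_transpose]
      have : A.mulVec m = δ := by
        funext i
        exact_mod_cast congrFun hAm i
      exact this
    obtain ⟨i₀, hi₀⟩ := hnontriv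
    -- character sum is zero
    have hGsum0 : ∑ q : ((Fin n → ℤ) ⧸ N), G q = 0 := by
      have hshift : ∑ q : ((Fin n → ℤ) ⧸ N), G q =
          ∑ q : ((Fin n → ℤ) ⧸ N), G (Submodule.Quotient.mk (Pi.single i₀ 1) + q) := by
        exact (Equiv.sum_comp (Equiv.addLeft
          (Submodule.Quotient.mk (Pi.single i₀ 1) : (Fin n → ℤ) ⧸ N)) G).symm
      have : ∑ q : ((Fin n → ℤ) ⧸ N), G q =
          g (Pi.single i₀ 1) * ∑ q : ((Fin n → ℤ) ⧸ N), G q := by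
        conv_lhs => rw [hshift]
        rw [Finset.mul_sum]
        exact Finset.sum_congr rfl fun q _ => hGshift _ q
      have h0 : (g (Pi.single i₀ 1) - 1) * ∑ q : ((Fin n → ℤ) ⧸ N), G q = 0 := by
        rw [sub_mul, one_mul, ← this, sub_self]
      rcases mul_eq_zero.mp h0 with h | h
      · exact absurd (by linear_combination h) hi₀
      · exact h
    calc ∑ q : ((Fin n → ℤ) ⧸ N), (C q * c)
        = ∑ q : ((Fin n → ℤ) ⧸ N),
            (((s * s : ℝ) : ℂ) * e (∑ i, (δ i : ℝ) * (B.mulVec x) i) * c) * G q := by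
          refine Finset.sum_congr rfl fun q _ => ?_
          rw [hCG q]
          ring
      _ = (((s * s : ℝ) : ℂ) * e (∑ i, (δ i : ℝ) * (B.mulVec x) i) * c) *
            ∑ q : ((Fin n → ℤ) ⧸ N), G q := by rw [Finset.mul_sum]
      _ = 0 := by rw [hGsum0, mul_zero]
  · -- case β = β'
    intro hββ
    have hδ0 : δ = 0 := by rw [hδdef, hββ, sub_self]
    have hCq : ∀ q, C q = ((s * s : ℝ) : ℂ) := by
      intro q
      simp only [hC]
      have h8 : (∑ i, (δ i : ℝ) * yq q i) = 0 := by
        rw [hδ0]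
        simp
      rw [h8]
      simp [e]
    rw [htsum]
    have hsum2 : ∑ q : ((Fin n → ℤ) ⧸ N), (C q * c) =
        (Fintype.card ((Fin n → ℤ) ⧸ N) : ℂ) * (((s * s : ℝ) : ℂ) * c) := by
      calc ∑ q : ((Fin n → ℤ) ⧸ N), (C q * c)
          = ∑ _q : ((Fin n → ℤ) ⧸ N), (((s * s : ℝ) : ℂ) * c) :=
            Finset.sum_congr rfl fun q _ => by rw [hCq q]
        _ = (Fintype.card ((Fin n → ℤ) ⧸ N) : ℂ) * (((s * s : ℝ) : ℂ) * c) := by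
            rw [Finset.sum_const, Finset.card_univ, nsmul_eq_mul]
    rw [hsum2]
    have hcard : (Fintype.card ((Fin n → ℤ) ⧸ N) : ℝ) = d := by
      rw [← Nat.card_eq_fintype_card, hcardN, hd]
      push_cast [Nat.cast_natAbs, Int.cast_abs]
      ring
    have hss : (s * s) * d = 1 := by
      rw [hs]
      rw [← mul_inv]
      rw [Real.mul_self_sqrt hd0.le]
      exact inv_mul_cancel₀ hd0.ne'
    have hone : (Fintype.card ((Fin n → ℤ) ⧸ N) : ℂ) * ((s * s : ℝ) : ℂ) = 1 := by
      have h7 : ((Fintype.card ((Fin n → ℤ) ⧸ N) : ℝ) * (s * s) : ℝ) = 1 := by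
        rw [hcard, mul_comm]
        exact hss
      calc (Fintype.card ((Fin n → ℤ) ⧸ N) : ℂ) * ((s * s : ℝ) : ℂ)
          = (((Fintype.card ((Fin n → ℤ) ⧸ N) : ℝ) * (s * s) : ℝ) : ℂ) := by push_cast; ring
        _ = 1 := by rw [h7]; norm_num
    rw [← mul_assoc, hone, one_mul]
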